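/- Let Ω be a finite list of rules of TRC containing no σ-rule (only atomic, replicative, decreasing and modal rules). For all modal trees T, S: if T rewrites to S by finitely many σ-steps followed by applying the rules of Ω in order, then T rewrites to S by applying the rules of Ω in order followed by finitely many σ-steps. -/

import Mathlib

namespace TRC

/-- Strictly positive formulas of `L⁺`. -/
inductive SPF : Type where
  | top : SPF
  | var : ℕ → SPF
  | dia : ℕ → SPF → SPF
  | and : SPF → SPF → SPF

/-- The sequent system `K⁺`. -/
inductive KPlus : SPF → SPF → Prop where
  | id (φ) : KPlus φ φ
  | topI (φ) : KPlus φ .top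
  | cut {φ ψ χ} : KPlus φ ψ → KPlus ψ χ → KPlus φ χ
  | andE₁ (φ ψ) : KPlus (.and φ ψ) φ
  | andE₂ (φ ψ) : KPlus (.and φ ψ) ψ
  | andI {φ ψ χ} : KPlus φ ψ → KPlus φ χ → KPlus φ (.and ψ χ)
  | dist {φ ψ} (α) : KPlus φ ψ → KPlus (.dia α φ) (.dia α ψ)

/-- The Reflection Calculus `RC`. -/
inductive RC : SPF → SPF → Prop where
  | id (φ) : RC φ φ
  | topI (φ) : RC φ .top
  | cut {φ ψ χ} : RC φ ψ → RC ψ χ → RC φ χ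
  | andE₁ (φ ψ) : RC (.and φ ψ) φ
  | andE₂ (φ ψ) : RC (.and φ ψ) ψ
  | andI {φ ψ χ} : RC φ ψ → RC φ χ → RC φ (.and ψ χ)
  | dist {φ ψ} (α) : RC φ ψ → RC (.dia α φ) (.dia α ψ)
  | trans (α φ) : RC (.dia α (.dia α φ)) (.dia α φ)
  | mono {α β} (φ) : β < α → RC (.dia α φ) (.dia β φ)
  | jax {α β} (φ ψ) : β < α → RC (.and (.dia α φ) (.dia β ψ)) (.dia α (.and φ (.dia β ψ)))

/-- Modal depth. -/
def SPF.md : SPF → ℕ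
  | .top => 0
  | .var _ => 0
  | .dia _ φ => φ.md + 1
  | .and φ ψ => max φ.md ψ.md

/-- Modal trees. -/
inductive MTree : Type where
  | node : List ℕ → List (ℕ × MTree) → MTree

/-- Sum of modal trees. -/
def MTree.sum : MTree → MTree → MTree
  | .node Δ₁ Γ₁, .node Δ₂ Γ₂ => .node (Δ₁ ++ Δ₂) (Γ₁ ++ Γ₂)

mutual
/-- Height of a modal tree. -/
def MTree.height : MTree → ℕ
  | .node _ Γ => heightL Γ
def heightL : List (ℕ × MTree) → ℕ
  | [] => 0
  | (_, S) :: Γ => max (S.height + 1) (heightL Γ)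
end

mutual
/-- `T.IsPos k`: the (1-indexed) string `k` is a position of `T`. -/
def MTree.IsPos : MTree → List ℕ → Prop
  | _, [] => True
  | .node _ Γ, i :: k => isPosL Γ i k
def isPosL : List (ℕ × MTree) → ℕ → List ℕ → Prop
  | [], _, _ => False
  | _ :: _, 0, _ => False
  | (_, S) :: _, 1, k => S.IsPos k
  | _ :: Γ, n+2, k => isPosL Γ (n+1) k
end

mutual
/-- Subtree of `T` at position `k` (returning a default junk value off positions). -/
def MTree.subtree : MTree → List ℕ → MTree
  | T, [] => T
  | .node Δ Γ, i :: k => subtreeL (.node Δ Γ) Γ i k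
def subtreeL : MTree → List (ℕ × MTree) → ℕ → List ℕ → MTree
  | d, [], _, _ => d
  | d, _ :: _, 0, _ => d
  | _, (_, S) :: _, 1, k => S.subtree k
  | d, _ :: Γ, n+2, k => subtreeL d Γ (n+1) k
end

mutual
/-- `T.replace S k`: replace the subtree of `T` at position `k` by `S`. -/
def MTree.replace : MTree → MTree → List ℕ → MTree
  | _, S, [] => S
  | .node Δ Γ, S, i :: k => .node Δ (replaceL Γ S i k)
def replaceL : List (ℕ × MTree) → MTree → ℕ → List ℕ → List (ℕ × MTree)
  | [], _, _, _ => []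
  | Γ, _, 0, _ => Γ
  | (α, C) :: Γ, S, 1, k => (α, C.replace S k) :: Γ
  | x :: Γ, S, n+2, k => x :: replaceL Γ S (n+1) k
end

/-- Names of the eight rewriting rules of TRC. -/
inductive Rule : Type where
  | rhoP | rhoM | sigma | piP | piM | four | lam | jay
  deriving DecidableEq

/-- One rewriting step performed at the root. -/
inductive RootStep : Rule → MTree → MTree → Prop where
  | rhoP {Δ Γ i p} (hi : 1 ≤ i) (h : Δ[i-1]? = some p) :
      RootStep .rhoP (.node Δ Γ) (.node (p :: Δ) Γ)
  | rhoM {Δ Γ i} (hi : 1 ≤ i) (h : i - 1 < Δ.length) :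
      RootStep .rhoM (.node Δ Γ) (.node (Δ.eraseIdx (i-1)) Γ)
  | sigma {Δ Γ i j x y} (hi : 1 ≤ i) (hj : 1 ≤ j) (hij : i ≠ j)
      (hx : Γ[i-1]? = some x) (hy : Γ[j-1]? = some y) :
      RootStep .sigma (.node Δ Γ) (.node Δ ((Γ.set (j-1) x).set (i-1) y))
  | piP {Δ Γ i x} (hi : 1 ≤ i) (hx : Γ[i-1]? = some x) :
      RootStep .piP (.node Δ Γ) (.node Δ (x :: Γ))
  | piM {Δ Γ i} (hi : 1 ≤ i) (h : i - 1 < Γ.length) :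
      RootStep .piM (.node Δ Γ) (.node Δ (Γ.eraseIdx (i-1)))
  | four {Δ Γ i j β Δt Γt S} (hi : 1 ≤ i) (hj : 1 ≤ j)
      (hΓ : Γ[i-1]? = some (β, MTree.node Δt Γt)) (hΓt : Γt[j-1]? = some (β, S)) :
      RootStep .four (.node Δ Γ) (.node Δ (Γ.set (i-1) (β, S)))
  | lam {Δ Γ i α β S} (hi : 1 ≤ i) (hβ : β < α) (hΓ : Γ[i-1]? = some (α, S)) :
      RootStep .lam (.node Δ Γ) (.node Δ (Γ.set (i-1) (β, S)))
  | jay {Δ Γ i j α β Δt Γt S} (hi : 1 ≤ i) (hj : 1 ≤ j) (hij : i ≠ j) (hβ : β < α)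
      (hΓi : Γ[i-1]? = some (α, MTree.node Δt Γt)) (hΓj : Γ[j-1]? = some (β, S)) :
      RootStep .jay (.node Δ Γ)
        (.node Δ ((Γ.set (i-1) (α, MTree.node Δt (Γt ++ [(β, S)]))).eraseIdx (j-1)))

/-- One step of the rule `r`, applied at some position. -/
def StepR (r : Rule) (T T' : MTree) : Prop :=
  ∃ k S, T.IsPos k ∧ RootStep r (T.subtree k) S ∧ T' = T.replace S k

/-- One step of the rewriting relation `↪`. -/
def Step (T T' : MTree) : Prop := ∃ r, StepR r T T'

/-- The rewriting relation `↪*`. -/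
def Steps : MTree → MTree → Prop := Relation.ReflTransGen Step

/-- TRC-equivalence `↔*`. -/
def TEquiv (T T' : MTree) : Prop := Steps T T' ∧ Steps T' T

/-- `T ↪^Ω S` : rewriting applying the rules of `Ω` in order, one step each. -/
inductive StepsOf : List Rule → MTree → MTree → Prop where
  | nil (T) : StepsOf [] T T
  | cons {r Ω T U S} : StepR r T U → StepsOf Ω U S → StepsOf (r :: Ω) T S

def AtomicStep (T S : MTree) : Prop := StepR .rhoP T S ∨ StepR .rhoM T S
def DecreasingStep (T S : MTree) : Prop := StepR .piM T S ∨ StepR .four T S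
def ModalStep (T S : MTree) : Prop := StepR .lam T S ∨ StepR .jay T S

/-- Finite conjunctions (empty conjunction is `⊤`). -/
def bigAnd : List SPF → SPF
  | [] => .top
  | φ :: l => .and φ (bigAnd l)

mutual
/-- The embedding `ℱ` of modal trees into formulas. -/
def MTree.toFormula : MTree → SPF
  | .node Δ Γ => .and (bigAnd (Δ.map SPF.var)) (diamL Γ)
def diamL : List (ℕ × MTree) → SPF
  | [] => .top
  | (α, S) :: Γ => .and (.dia α S.toFormula) (diamL Γ)
end

/-- The embedding `𝒯` of formulas into modal trees. -/
def SPF.toTree : SPF → MTree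
  | .top => .node [] []
  | .var p => .node [p] []
  | .dia α φ => .node [] [(α, φ.toTree)]
  | .and φ ψ => φ.toTree.sum ψ.toTree

/-- Nonempty conjunction `φ₁ ∧ (φ₂ ∧ (… ∧ φₙ))`. -/
def conjNE : SPF → List SPF → SPF
  | φ, [] => φ
  | φ, ψ :: l => .and φ (conjNE ψ l)

end TRC

/-!
σ-steps only reorder lists of children, at any depth. Hence, if `T ↪σ* U`, every child of a
node of `U` has a counterpart in `T` that reaches it by σ-steps, and the remaining children
correspond in the same way. Any other rule acts on the atoms or on one or two children of a
single node (for `𝔣4` and `J` also on the children of one of them); fired on the counterparts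
in `T`, it yields a tree that reaches the result in `U` by σ-steps. So a σ-free step can be
moved in front of a block of σ-steps, and induction along `Ω` moves all σ-steps to the end.
-/

namespace List

variable {α : Type*}

theorem perm_cons_eraseIdx_of_getElem? {l : List α} {n : ℕ} {a : α} (h : l[n]? = some a) :
    l ~ a :: l.eraseIdx n := by
  obtain ⟨hn, rfl⟩ := getElem?_eq_some_iff.1 h
  exact (getElem_cons_eraseIdx_perm hn).symm

theorem Perm.exists_getElem?_eraseIdx {l R : List α} {a : α} (h : l ~ a :: R) :
    ∃ i, l[i]? = some a ∧ l.eraseIdx i ~ R := by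
  obtain ⟨i, hi⟩ := mem_iff_getElem?.1 (h.symm.subset mem_cons_self)
  exact ⟨i, hi, ((perm_cons_eraseIdx_of_getElem? hi).symm.trans h).cons_inv⟩

theorem Perm.cons_cons_cases {a b : α} {l m : List α} (h : a :: l ~ b :: m) :
    a = b ∧ l ~ m ∨ ∃ k, l ~ b :: k ∧ m ~ a :: k := by
  classical
  by_cases hab : a = b
  · subst hab
    exact .inl ⟨rfl, h.cons_inv⟩
  · have ham : a ∈ m := (mem_cons.1 (h.subset mem_cons_self)).resolve_left hab
    refine .inr ⟨m.erase a, ?_, perm_cons_erase ham⟩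
    simpa [erase_cons, Ne.symm hab] using (cons_perm_iff_perm_erase.1 h).2

theorem exists_perm_cons_cons_of_getElem? {l : List α} {i j : ℕ} {a b : α} (hij : i ≠ j)
    (ha : l[i]? = some a) (hb : l[j]? = some b) :
    ∃ E, l ~ a :: b :: E ∧ ∀ c, (l.set i c).eraseIdx j ~ c :: E := by
  obtain ⟨k, hk⟩ := mem_iff_getElem?.1 (mem_eraseIdx_iff_getElem?.2 ⟨j, hij.symm, hb⟩)
  have hE := perm_cons_eraseIdx_of_getElem? hk
  refine ⟨_, (perm_cons_eraseIdx_of_getElem? ha).trans (hE.cons a), fun c => ?_⟩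
  have hj : (l.set i c)[j]? = some b := by rwa [getElem?_set_ne hij]
  have hi : i < l.length := (getElem?_eq_some_iff.1 ha).1
  exact ((perm_cons_eraseIdx_of_getElem? hj).symm.trans
    ((set_perm_cons_eraseIdx hi c).trans ((hE.cons c).trans (Perm.swap b c _)))).cons_inv

theorem Perm.exists_getElem?_getElem? {l R : List α} {a b : α} (h : l ~ a :: b :: R) :
    ∃ i j, i ≠ j ∧ l[i]? = some a ∧ l[j]? = some b ∧ ∀ c, (l.set i c).eraseIdx j ~ c :: R := by
  obtain ⟨i, hi, hiR⟩ := h.exists_getElem?_eraseIdx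
  obtain ⟨j, hji, hj⟩ := mem_eraseIdx_iff_getElem?.1 (hiR.symm.subset mem_cons_self)
  obtain ⟨E, hl, hset⟩ := exists_perm_cons_cons_of_getElem? (Ne.symm hji) hi hj
  have hER : E ~ R := (hl.symm.trans h).cons_inv.cons_inv
  exact ⟨i, j, Ne.symm hji, hi, hj, fun c => (hset c).trans (hER.cons c)⟩

theorem set_set_perm_of_getElem? {l : List α} {i j : ℕ} {x y : α} (hx : l[i]? = some x)
    (hy : l[j]? = some y) : (l.set j x).set i y ~ l := by
  obtain ⟨hi, rfl⟩ := getElem?_eq_some_iff.1 hx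
  obtain ⟨hj, rfl⟩ := getElem?_eq_some_iff.1 hy
  exact set_set_perm hj hi

end List

namespace TRC

theorem isPosL_iff {Γ : List (ℕ × MTree)} {i : ℕ} {k : List ℕ} :
    isPosL Γ i k ↔ ∃ q e, i = q + 1 ∧ Γ[q]? = some e ∧ e.2.IsPos k := by
  induction Γ generalizing i with
  | nil => simp [isPosL]
  | cons x Γ ih =>
    obtain ⟨α, S⟩ := x
    match i with
    | 0 => simp [isPosL]
    | 1 => simp [isPosL]
    | n + 2 => simp [isPosL, ih]

theorem subtreeL_succ {d : MTree} {Γ : List (ℕ × MTree)} {q : ℕ} {e : ℕ × MTree}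
    (h : Γ[q]? = some e) (k : List ℕ) : subtreeL d Γ (q + 1) k = e.2.subtree k := by
  induction Γ generalizing q with
  | nil => simp at h
  | cons x Γ ih =>
    obtain ⟨α, S⟩ := x
    cases q with
    | zero => simp only [List.getElem?_cons_zero, Option.some_inj] at h; subst h; rfl
    | succ q => exact ih (by simpa using h)

theorem replaceL_succ {Γ : List (ℕ × MTree)} {q α : ℕ} {C : MTree}
    (h : Γ[q]? = some (α, C)) (V : MTree) (k : List ℕ) :
    replaceL Γ V (q + 1) k = Γ.set q (α, C.replace V k) := by
  induction Γ generalizing q with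
  | nil => simp at h
  | cons x Γ ih =>
    obtain ⟨β, S⟩ := x
    cases q with
    | zero => simp only [List.getElem?_cons_zero, Option.some_inj] at h; cases h; rfl
    | succ q => simp [replaceL, ih (by simpa using h)]

theorem stepR_node_set {r : Rule} {Δ : List ℕ} {Γ : List (ℕ × MTree)} {q α : ℕ}
    {C C' : MTree} (hq : Γ[q]? = some (α, C)) (h : StepR r C C') :
    StepR r (.node Δ Γ) (.node Δ (Γ.set q (α, C'))) := by
  obtain ⟨k, V, hpos, hroot, rfl⟩ := h
  refine ⟨(q + 1) :: k, V, isPosL_iff.2 ⟨q, _, rfl, hq, hpos⟩, ?_, ?_⟩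
  · rwa [MTree.subtree, subtreeL_succ hq]
  · rw [MTree.replace, replaceL_succ hq]

local notation:50 T:51 " ↪σ* " U:51 => Relation.ReflTransGen (StepR Rule.sigma) T U

theorem sigmaSteps_node_of_perm {Δ : List ℕ} {Γ Γ' : List (ℕ × MTree)} (h : Γ.Perm Γ') :
    .node Δ Γ ↪σ* .node Δ Γ' := by
  let rootSigma (L L' : List (ℕ × MTree)) := RootStep .sigma (.node Δ L) (.node Δ L')
  have hroot : Relation.ReflTransGen rootSigma Γ Γ' := by
    induction h with
    | nil => exact .refl
    | cons x _ ih =>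
      refine ih.lift (x :: ·) fun L L' hL => ?_
      cases hL with
      | sigma hi hj hij hx hy =>
        rename_i i j _ _
        obtain ⟨i, rfl⟩ : ∃ i', i = i' + 1 := ⟨i - 1, by omega⟩
        obtain ⟨j, rfl⟩ : ∃ j', j = j' + 1 := ⟨j - 1, by omega⟩
        simpa using RootStep.sigma (Δ := Δ) (Γ := x :: L) (i := i + 2) (j := j + 2)
          (by omega) (by omega) (by omega) (by simpa using hx) (by simpa using hy)
    | swap x y l =>
      have hswap := RootStep.sigma (Δ := Δ) (Γ := y :: x :: l) (i := 1) (j := 2)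
        (by omega) (by omega) (by omega) rfl rfl
      exact .single (by simpa using hswap)
    | trans _ _ ih₁ ih₂ => exact ih₁.trans ih₂
  exact hroot.lift (MTree.node Δ) fun _ _ hL => ⟨[], _, trivial, hL, rfl⟩

theorem sigmaSteps_node_set {Δ : List ℕ} {Γ : List (ℕ × MTree)} {q α : ℕ} {C C' : MTree}
    (hq : Γ[q]? = some (α, C)) (h : C ↪σ* C') :
    .node Δ Γ ↪σ* .node Δ (Γ.set q (α, C')) := by
  obtain ⟨hlen, hget⟩ := List.getElem?_eq_some_iff.1 hq
  induction h with
  | refl => rw [← hget, List.set_getElem_self]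
  | tail _ hstep ih =>
    refine ih.tail ?_
    simpa using stepR_node_set (Δ := Δ) (List.getElem?_set_self (a := (α, _)) hlen) hstep

inductive SigmaMove : List (ℕ × MTree) → List (ℕ × MTree) → Prop
  | perm {Γ Γ' : List (ℕ × MTree)} : Γ.Perm Γ' → SigmaMove Γ Γ'
  | child {Γ : List (ℕ × MTree)} {q α : ℕ} {C C' : MTree} :
      Γ[q]? = some (α, C) → C ↪σ* C' → SigmaMove Γ (Γ.set q (α, C'))

abbrev SigmaMoves : List (ℕ × MTree) → List (ℕ × MTree) → Prop :=
  Relation.ReflTransGen SigmaMove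

theorem SigmaMoves.sigmaSteps_node {Γ Γ' : List (ℕ × MTree)} (h : SigmaMoves Γ Γ')
    (Δ : List ℕ) : .node Δ Γ ↪σ* .node Δ Γ' :=
  h.lift' (MTree.node Δ) fun _ _ hm => match hm with
    | .perm hp => sigmaSteps_node_of_perm hp
    | .child hq hC => sigmaSteps_node_set hq hC

theorem exists_sigmaMove_of_stepR {Δ : List ℕ} {Γ : List (ℕ × MTree)} {T : MTree}
    (h : StepR .sigma (.node Δ Γ) T) : ∃ Γ', T = .node Δ Γ' ∧ SigmaMove Γ Γ' := by
  obtain ⟨k, V, hpos, hroot, rfl⟩ := h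
  cases k with
  | nil =>
    change RootStep .sigma (.node Δ Γ) V at hroot
    cases hroot with
    | sigma _ _ _ hx hy => exact ⟨_, rfl, .perm (List.set_set_perm_of_getElem? hx hy).symm⟩
  | cons i k =>
    obtain ⟨q, ⟨α, C⟩, rfl, hq, hpos⟩ := isPosL_iff.1 hpos
    rw [MTree.subtree, subtreeL_succ hq] at hroot
    exact ⟨_, by rw [MTree.replace, replaceL_succ hq], .child hq (.single ⟨k, V, hpos, hroot, rfl⟩)⟩

theorem sigmaSteps_node_iff {Δ Δ' : List ℕ} {Γ Γ' : List (ℕ × MTree)} :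
    .node Δ Γ ↪σ* .node Δ' Γ' ↔ Δ = Δ' ∧ SigmaMoves Γ Γ' := by
  refine ⟨fun h => ?_, fun ⟨hΔ, hΓ⟩ => hΔ ▸ hΓ.sigmaSteps_node Δ⟩
  suffices ∀ T, .node Δ Γ ↪σ* T → ∃ Γ'', T = .node Δ Γ'' ∧ SigmaMoves Γ Γ'' by
    obtain ⟨_, hT, hΓ⟩ := this _ h
    injection hT with hΔ hΓ'
    exact ⟨hΔ.symm, hΓ' ▸ hΓ⟩
  intro T hT
  induction hT with
  | refl => exact ⟨Γ, rfl, .refl⟩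
  | tail _ hstep ih =>
    obtain ⟨_, rfl, hmoves⟩ := ih
    obtain ⟨_, rfl, hmove⟩ := exists_sigmaMove_of_stepR hstep
    exact ⟨_, rfl, hmoves.tail hmove⟩

theorem SigmaMoves.cons {R R' : List (ℕ × MTree)} (h : SigmaMoves R R') (x : ℕ × MTree) :
    SigmaMoves (x :: R) (x :: R') :=
  h.lift (x :: ·) fun _ _ hm => match hm with
    | .perm hp => .perm (hp.cons x)
    | .child hq hC => by
      have hcons := SigmaMove.child (Γ := x :: _) (q := _ + 1) (by simpa using hq) hC
      simpa using hcons

theorem sigmaMoves_of_perm_cons {Γ Γ' R R' : List (ℕ × MTree)} {α : ℕ} {C C' : MTree}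
    (hΓ : Γ.Perm ((α, C) :: R)) (hC : C ↪σ* C') (hR : SigmaMoves R R')
    (hΓ' : ((α, C') :: R').Perm Γ') : SigmaMoves Γ Γ' :=
  have hhead : SigmaMove ((α, C) :: R) ((α, C') :: R) :=
    SigmaMove.child (Γ := (α, C) :: R) (q := 0) rfl hC
  ((Relation.ReflTransGen.single (.perm hΓ)).tail hhead).trans ((hR.cons _).tail (.perm hΓ'))

theorem SigmaMove.exists_perm_cons {Γ Γ' R' : List (ℕ × MTree)} {α : ℕ} {C' : MTree}
    (h : SigmaMove Γ Γ') (hΓ' : Γ'.Perm ((α, C') :: R')) :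
    ∃ C R, Γ.Perm ((α, C) :: R) ∧ C ↪σ* C' ∧ SigmaMoves R R' := by
  cases h with
  | perm hp => exact ⟨C', R', hp.trans hΓ', .refl, .refl⟩
  | child hq hD =>
    have hΓ := List.perm_cons_eraseIdx_of_getElem? hq
    have hlen := (List.getElem?_eq_some_iff.1 hq).1
    rcases ((List.set_perm_cons_eraseIdx hlen _).symm.trans hΓ').cons_cons_cases with
      ⟨heq, hE⟩ | ⟨K, hE, hR'⟩
    · obtain ⟨rfl, rfl⟩ := Prod.mk.inj heq
      exact ⟨_, _, hΓ, hD, .single (.perm hE)⟩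
    · exact ⟨C', _, hΓ.trans ((hE.cons _).trans (.swap _ _ _)), .refl,
        sigmaMoves_of_perm_cons (.refl _) hD .refl hR'.symm⟩

theorem SigmaMoves.exists_perm_cons {Γ Γ' R' : List (ℕ × MTree)} {α : ℕ} {C' : MTree}
    (h : SigmaMoves Γ Γ') (hΓ' : Γ'.Perm ((α, C') :: R')) :
    ∃ C R, Γ.Perm ((α, C) :: R) ∧ C ↪σ* C' ∧ SigmaMoves R R' := by
  induction h using Relation.ReflTransGen.head_induction_on with
  | refl => exact ⟨C', R', hΓ', .refl, .refl⟩
  | head hm _ ih =>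
    obtain ⟨C₁, R₁, h₁, hC₁, hR₁⟩ := ih
    obtain ⟨C, R, h₀, hC, hR⟩ := hm.exists_perm_cons h₁
    exact ⟨C, R, h₀, hC.trans hC₁, hR.trans hR₁⟩

theorem SigmaMoves.exists_getElem? {Γ Γ' : List (ℕ × MTree)} (hΓ : SigmaMoves Γ Γ') {q α : ℕ}
    {C' : MTree} (hq : Γ'[q]? = some (α, C')) :
    ∃ q₀ C, Γ[q₀]? = some (α, C) ∧ C ↪σ* C' ∧ SigmaMoves (Γ.eraseIdx q₀) (Γ'.eraseIdx q) := by
  obtain ⟨C, R, hperm, hC, hR⟩ := hΓ.exists_perm_cons (List.perm_cons_eraseIdx_of_getElem? hq)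
  obtain ⟨q₀, hq₀, hR₀⟩ := hperm.exists_getElem?_eraseIdx
  exact ⟨q₀, C, hq₀, hC, (Relation.ReflTransGen.single (.perm hR₀)).trans hR⟩

theorem SigmaMoves.set {Γ Γ' : List (ℕ × MTree)} {q₀ q α : ℕ} {x x' : ℕ × MTree}
    {C C' : MTree} (hq₀ : Γ[q₀]? = some x) (hq : Γ'[q]? = some x')
    (hE : SigmaMoves (Γ.eraseIdx q₀) (Γ'.eraseIdx q)) (hC : C ↪σ* C') :
    SigmaMoves (Γ.set q₀ (α, C)) (Γ'.set q (α, C')) :=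
  sigmaMoves_of_perm_cons (List.set_perm_cons_eraseIdx (List.getElem?_eq_some_iff.1 hq₀).1 _)
    hC hE (List.set_perm_cons_eraseIdx (List.getElem?_eq_some_iff.1 hq).1 _).symm

theorem SigmaMoves.exists_rootStep_four {Γ Γ' : List (ℕ × MTree)} (hΓ : SigmaMoves Γ Γ')
    {Δ Δt : List ℕ} {Γt : List (ℕ × MTree)} {i j β : ℕ} {S : MTree}
    (hΓi : Γ'[i-1]? = some (β, .node Δt Γt)) (hΓt : Γt[j-1]? = some (β, S)) :
    ∃ S', RootStep .four (.node Δ Γ) S' ∧ S' ↪σ* .node Δ (Γ'.set (i-1) (β, S)) := by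
  obtain ⟨i₀, ⟨Δd, Γd⟩, hi₀, hD, hE⟩ := hΓ.exists_getElem? hΓi
  obtain ⟨rfl, hΓd⟩ := sigmaSteps_node_iff.1 hD
  obtain ⟨j₀, S₀, hj₀, hS₀, -⟩ := hΓd.exists_getElem? hΓt
  refine ⟨_, .four (i := i₀ + 1) (j := j₀ + 1) (by omega) (by omega) hi₀ hj₀, ?_⟩
  exact (SigmaMoves.set hi₀ hΓi hE hS₀).sigmaSteps_node Δ

theorem SigmaMoves.exists_rootStep_jay {Γ Γ' : List (ℕ × MTree)} (hΓ : SigmaMoves Γ Γ')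
    {Δ Δt : List ℕ} {Γt : List (ℕ × MTree)} {i j α β : ℕ} {S : MTree} (hij : i - 1 ≠ j - 1)
    (hβ : β < α) (hΓi : Γ'[i-1]? = some (α, .node Δt Γt)) (hΓj : Γ'[j-1]? = some (β, S)) :
    ∃ S', RootStep .jay (.node Δ Γ) S' ∧
      S' ↪σ* .node Δ ((Γ'.set (i-1) (α, .node Δt (Γt ++ [(β, S)]))).eraseIdx (j-1)) := by
  obtain ⟨E, hΓ', hsetΓ'⟩ := List.exists_perm_cons_cons_of_getElem? hij hΓi hΓj
  obtain ⟨⟨Δd, Γd⟩, R₁, hperm₁, hD, hR₁⟩ := hΓ.exists_perm_cons hΓ'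
  obtain ⟨S₀, R₂, hperm₂, hS₀, hR₂⟩ := hR₁.exists_perm_cons (.refl _)
  obtain ⟨rfl, hΓd⟩ := sigmaSteps_node_iff.1 hD
  obtain ⟨i₀, j₀, hij₀, hi₀, hj₀, hsetΓ⟩ := (hperm₁.trans (hperm₂.cons _)).exists_getElem?_getElem?
  refine ⟨_, .jay (i := i₀ + 1) (j := j₀ + 1) (by omega) (by omega) (by omega) hβ hi₀ hj₀, ?_⟩
  have hchild : MTree.node Δd (Γd ++ [(β, S₀)]) ↪σ* .node Δd (Γt ++ [(β, S)]) :=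
    (sigmaMoves_of_perm_cons (List.perm_append_singleton _ _) hS₀ hΓd
      (List.perm_append_singleton _ _).symm).sigmaSteps_node Δd
  exact (sigmaMoves_of_perm_cons (hsetΓ _) hchild hR₂ (hsetΓ' _).symm).sigmaSteps_node Δ

theorem SigmaMoves.exists_rootStep {r : Rule} (hr : r ≠ .sigma) {Γ Γ' : List (ℕ × MTree)}
    (hΓ : SigmaMoves Γ Γ') {Δ : List ℕ} {S : MTree} (h : RootStep r (.node Δ Γ') S) :
    ∃ S', RootStep r (.node Δ Γ) S' ∧ S' ↪σ* S := by
  cases h with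
  | rhoP hi hp => exact ⟨_, .rhoP hi hp, hΓ.sigmaSteps_node _⟩
  | rhoM hi hlt => exact ⟨_, .rhoM hi hlt, hΓ.sigmaSteps_node _⟩
  | sigma => exact absurd rfl hr
  | piP hi hx =>
    obtain ⟨i₀, C, hi₀, hC, -⟩ := hΓ.exists_getElem? hx
    exact ⟨_, .piP (i := i₀ + 1) (by omega) hi₀,
      (sigmaMoves_of_perm_cons (.refl _) hC hΓ (.refl _)).sigmaSteps_node Δ⟩
  | piM hi hlt =>
    obtain ⟨i₀, C, hi₀, -, hE⟩ := hΓ.exists_getElem? (List.getElem?_eq_getElem hlt)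
    exact ⟨_, .piM (i := i₀ + 1) (by omega) (List.getElem?_eq_some_iff.1 hi₀).1,
      hE.sigmaSteps_node Δ⟩
  | four _ _ hΓi hΓt => exact hΓ.exists_rootStep_four hΓi hΓt
  | lam hi hβ hΓi =>
    obtain ⟨i₀, C, hi₀, hC, hE⟩ := hΓ.exists_getElem? hΓi
    exact ⟨_, .lam (i := i₀ + 1) (by omega) hβ hi₀,
      (SigmaMoves.set hi₀ hΓi hE hC).sigmaSteps_node Δ⟩
  | jay hi hj hij hβ hΓi hΓj => exact hΓ.exists_rootStep_jay (by omega) hβ hΓi hΓj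

theorem exists_stepR_of_sigmaSteps_of_rootStep {r : Rule} (hr : r ≠ .sigma) {V : MTree} :
    ∀ {k : List ℕ} {T U : MTree}, T ↪σ* U → U.IsPos k → RootStep r (U.subtree k) V →
      ∃ S', StepR r T S' ∧ S' ↪σ* U.replace V k
  | [], ⟨_, _⟩, ⟨_, _⟩, hTU, _, hroot => by
    obtain ⟨rfl, hΓ⟩ := sigmaSteps_node_iff.1 hTU
    obtain ⟨S', hS', hS'V⟩ := hΓ.exists_rootStep hr hroot
    exact ⟨S', ⟨[], S', trivial, hS', rfl⟩, hS'V⟩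
  | _ :: _, ⟨_, _⟩, ⟨_, _⟩, hTU, hpos, hroot => by
    obtain ⟨rfl, hΓ⟩ := sigmaSteps_node_iff.1 hTU
    obtain ⟨q, ⟨α, C'⟩, rfl, hq, hpos⟩ := isPosL_iff.1 hpos
    rw [MTree.subtree, subtreeL_succ hq] at hroot
    obtain ⟨q₀, C, hq₀, hC, hE⟩ := hΓ.exists_getElem? hq
    obtain ⟨S₀, hS₀, hS₀V⟩ := exists_stepR_of_sigmaSteps_of_rootStep hr hC hpos hroot
    refine ⟨_, stepR_node_set hq₀ hS₀, ?_⟩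
    rw [MTree.replace, replaceL_succ hq]
    exact (SigmaMoves.set hq₀ hq hE hS₀V).sigmaSteps_node _

theorem exists_stepR_of_sigmaSteps {r : Rule} (hr : r ≠ .sigma) {T U S : MTree}
    (hTU : T ↪σ* U) (hUS : StepR r U S) : ∃ S', StepR r T S' ∧ S' ↪σ* S := by
  obtain ⟨k, V, hpos, hroot, rfl⟩ := hUS
  exact exists_stepR_of_sigmaSteps_of_rootStep hr hTU hpos hroot

theorem StepsOf.exists_of_sigmaSteps {Ω : List Rule} (hΩ : ∀ r ∈ Ω, r ≠ .sigma) {U S : MTree}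
    (h : StepsOf Ω U S) : ∀ {T : MTree}, T ↪σ* U → ∃ V, StepsOf Ω T V ∧ V ↪σ* S := by
  induction h with
  | nil => exact fun hTU => ⟨_, .nil _, hTU⟩
  | cons hstep _ ih =>
    intro T hTU
    obtain ⟨W, hW, hWU⟩ := exists_stepR_of_sigmaSteps (hΩ _ List.mem_cons_self) hTU hstep
    obtain ⟨V, hV, hVS⟩ := ih (fun r hr => hΩ r (List.mem_cons_of_mem _ hr)) hWU
    exact ⟨V, .cons hW hV, hVS⟩

end TRC

/-- finitely many `σ`-steps followed by a `σ`-free list `Ω` of rules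
can be replaced by `Ω` followed by finitely many `σ`-steps. -/
theorem sigma_star_permutation (Ω : List TRC.Rule) (hΩ : ∀ r ∈ Ω, r ≠ TRC.Rule.sigma)
    (T S : TRC.MTree)
    (h : ∃ U, Relation.ReflTransGen (TRC.StepR .sigma) T U ∧ TRC.StepsOf Ω U S) :
    ∃ U, TRC.StepsOf Ω T U ∧ Relation.ReflTransGen (TRC.StepR .sigma) U S := by
  obtain ⟨U, hTU, hUS⟩ := h
  exact hUS.exists_of_sigmaSteps hΩ hTU
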